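/- arXiv:2003.10036 — 2 statements merged into one kernel-verified Lean document; each statement's English description precedes it below -/
import Mathlib

section
/- Kitai's hypercyclicity criterion: let X be a separable Banach space and T a bounded linear operator on X. Suppose there is a strictly increasing sequence (n_k) of naturals, a dense subset D₁ of X on which T^{n_k} x → 0 for every x ∈ D₁, a dense subset D₂ of X, and maps S_k : D₂ → X with S_k y → 0 and T^{n_k}(S_k y) → y for every y ∈ D₂. Then T has a vector with dense orbit. -/
open Filter Topology

theorem kitai_criterion
    (X : Type*) [NormedAddCommGroup X] [NormedSpace ℂ X] [CompleteSpace X]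
    [TopologicalSpace.SeparableSpace X]
    (T : X →L[ℂ] X) (n : ℕ → ℕ) (hn : StrictMono n)
    (D₁ D₂ : Set X) (hD₁ : Dense D₁) (hD₂ : Dense D₂)
    (S : ℕ → X → X)
    (h1 : ∀ x ∈ D₁, Tendsto (fun k => (T ^ (n k)) x) atTop (𝓝 0))
    (h2 : ∀ y ∈ D₂, Tendsto (fun k => S k y) atTop (𝓝 0))
    (h3 : ∀ y ∈ D₂, Tendsto (fun k => (T ^ (n k)) (S k y)) atTop (𝓝 y)) :
    ∃ x : X, Dense (Set.range fun m : ℕ => (T ^ m) x) := by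
  -- topological transitivity
  have trans : ∀ U V : Set X, IsOpen U → IsOpen V → U.Nonempty → V.Nonempty →
      ∃ x : X, ∃ m : ℕ, x ∈ U ∧ (T ^ m) x ∈ V := by
    intro U V hU hV hUne hVne
    obtain ⟨x, hxU, hxD⟩ := hD₁.inter_open_nonempty U hU hUne
    obtain ⟨y, hyV, hyD⟩ := hD₂.inter_open_nonempty V hV hVne
    have htend1 : Tendsto (fun k => x + S k y) atTop (𝓝 x) := by
      have := (h2 y hyD).const_add x
      simpa using this
    have htend2 : Tendsto (fun k => (T ^ (n k)) (x + S k y)) atTop (𝓝 y) := by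
      have : Tendsto (fun k => (T ^ (n k)) x + (T ^ (n k)) (S k y)) atTop (𝓝 (0 + y)) :=
        (h1 x hxD).add (h3 y hyD)
      simpa [map_add] using this
    have hev1 : ∀ᶠ k in atTop, x + S k y ∈ U := htend1.eventually (hU.mem_nhds hxU)
    have hev2 : ∀ᶠ k in atTop, (T ^ (n k)) (x + S k y) ∈ V :=
      htend2.eventually (hV.mem_nhds hyV)
    obtain ⟨k, hk1, hk2⟩ := (hev1.and hev2).exists
    exact ⟨x + S k y, n k, hk1, hk2⟩
  -- countable basis
  obtain ⟨b, hbc, -, hb⟩ := TopologicalSpace.exists_countable_basis X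
  have : Countable {V : Set X // V ∈ b ∧ V.Nonempty} :=
    (hbc.mono (fun V hV => hV.1)).to_subtype
  -- the Gδ set of hypercyclic-ish vectors
  set G : Set X := ⋂ (V : {V : Set X // V ∈ b ∧ V.Nonempty}),
    ⋃ m : ℕ, (fun x => (T ^ m) x) ⁻¹' V.1 with hG
  have hGdense : Dense G := by
    apply dense_iInter_of_isOpen
    · rintro ⟨V, hVb, hVne⟩
      exact isOpen_iUnion fun m => ((T ^ m).continuous.isOpen_preimage _ (hb.isOpen hVb))
    · rintro ⟨V, hVb, hVne⟩
      rw [dense_iff_inter_open]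
      intro U hU hUne
      obtain ⟨x, m, hxU, hxV⟩ := trans U V hU (hb.isOpen hVb) hUne hVne
      exact ⟨x, hxU, Set.mem_iUnion.2 ⟨m, hxV⟩⟩
  obtain ⟨x, hx⟩ := hGdense.nonempty
  refine ⟨x, hb.dense_iff.2 ?_⟩
  intro V hVb hVne
  have := Set.mem_iInter.1 hx ⟨V, hVb, hVne⟩
  obtain ⟨m, hm⟩ := Set.mem_iUnion.1 this
  exact ⟨(T ^ m) x, hm, Set.mem_range_self m⟩
end

section
/- In a second countable locally compact group G, an element a is aperiodic (the closed subgroup generated by a is not compact) if and only if for every compact subset E of G there exists N ∈ ℕ such that E ∩ E·aⁿ = ∅ for all n ≥ N. -/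
/-! If `E ∩ E aⁿ ≠ ∅` for infinitely many `n`, then `aⁿ ∈ E⁻¹E` infinitely often, so `(aⁿ)` has a
cluster point `y`; comparing two late returns of `aⁿ` close to `y` shows that `1`, and then every
point of `H = closure ⟨a⟩`, is a cluster point of `(aⁿ)_{n ∈ ℕ}`. Take a compact neighbourhood `V`
of `1` with interior `W`. Finitely many translates `W aᵏ`, `1 ≤ k ≤ N`, cover `V ∩ H`; for `x ∈ H`
the least `m` with `aᵐ ∈ xW` therefore satisfies `m ≤ N` (otherwise `x⁻¹aᵐ ∈ W aᵏ` gives the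
smaller exponent `m - k`), so `H ⊆ ⋃_{m ≤ N} aᵐ V⁻¹` is compact. -/

open Filter Set Topology Pointwise

section

variable {G : Type*} [Group G]

theorem Set.inter_image_mul_right_nonempty_iff {s : Set G} {g : G} :
    (s ∩ (· * g) '' s).Nonempty ↔ g ∈ s⁻¹ * s := by
  constructor
  · rintro ⟨_, hx, y, hy, rfl⟩
    exact ⟨y⁻¹, inv_mem_inv.2 hy, y * g, hx, inv_mul_cancel_left y g⟩
  · rintro ⟨y, hy, x, hx, rfl⟩
    exact ⟨x, hx, y⁻¹, hy, inv_mul_cancel_left y x⟩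

variable [TopologicalSpace G] [IsTopologicalGroup G] {a x : G}

theorem MapClusterPt.mul_zpow (h : MapClusterPt x atTop (a ^ · : ℤ → G)) (k : ℤ) :
    MapClusterPt (x * a ^ k) atTop (a ^ · : ℤ → G) := by
  refine MapClusterPt.of_comp (tendsto_atTop_add_const_right _ k tendsto_id) ?_
  simpa only [Function.comp_def, id, zpow_add] using
    h.continuousAt_comp (continuous_mul_const (a ^ k)).continuousAt

theorem MapClusterPt.one_of_zpow (h : MapClusterPt x atTop (a ^ · : ℤ → G)) :
    MapClusterPt 1 atTop (a ^ · : ℤ → G) := by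
  refine mapClusterPt_iff_frequently.2 fun W hW => frequently_atTop.2 fun M => ?_
  obtain ⟨U, hU, hUW⟩ := exists_nhds_split_inv hW
  have hxU : {g | g⁻¹ * x ∈ U} ∈ 𝓝 x :=
    (continuous_inv.mul continuous_const).continuousAt.preimage_mem_nhds (by simpa using hU)
  have hfreq := frequently_atTop.1 (mapClusterPt_iff_frequently.1 h _ hxU)
  obtain ⟨n₁, -, h₁⟩ := hfreq 0
  obtain ⟨n₂, hn₂, h₂⟩ := hfreq (n₁ + M)
  refine ⟨n₂ - n₁, by omega, ?_⟩
  have hdiv : a ^ (n₂ - n₁) = ((a ^ n₁)⁻¹ * x) / ((a ^ n₂)⁻¹ * x) := by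
    rw [div_eq_mul_inv, mul_inv_rev, inv_inv, mul_assoc, mul_inv_cancel_left, ← zpow_neg,
      ← zpow_add, neg_add_eq_sub]
  exact hdiv ▸ hUW _ h₁ _ h₂

theorem closure_zpowers_subset_setOf_mapClusterPt (h : MapClusterPt 1 atTop (a ^ · : ℤ → G)) :
    closure (Subgroup.zpowers a : Set G) ⊆ {x | MapClusterPt x atTop (a ^ · : ℕ → G)} := by
  simp_rw [← mapClusterPt_atTop_zpow_iff_pow]
  refine closure_minimal ?_ isClosed_setOfPred_clusterPt
  rintro _ ⟨k, rfl⟩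
  simpa using h.mul_zpow k

theorem IsCompact.exists_mul_inv_pow_mem_of_mapClusterPt {K W : Set G} (hK : IsCompact K)
    (hKa : ∀ x ∈ K, MapClusterPt x atTop (a ^ · : ℕ → G)) (hW : IsOpen W) (hW1 : (1 : G) ∈ W) :
    ∃ N : ℕ, ∀ g ∈ K, ∃ k ∈ Icc 1 N, g * (a ^ k)⁻¹ ∈ W := by
  obtain ⟨t, ht⟩ := hK.elim_finite_subcover (fun k : ℕ => (· * (a ^ (k + 1))⁻¹) ⁻¹' W)
    (fun k => hW.preimage (by fun_prop)) fun g hg => by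
      have hg' : {y | g * y⁻¹ ∈ W} ∈ 𝓝 g :=
        (hW.preimage (by fun_prop)).mem_nhds (by simpa using hW1)
      obtain ⟨k, hk, hkW⟩ := frequently_atTop.1 (mapClusterPt_iff_frequently.1 (hKa g hg) _ hg') 1
      obtain ⟨k, rfl⟩ := Nat.exists_eq_add_of_le' hk
      exact mem_iUnion.2 ⟨k, hkW⟩
  refine ⟨t.sup id + 1, fun g hg => ?_⟩
  obtain ⟨k, hkt, hkW⟩ := mem_iUnion₂.1 (ht hg)
  exact ⟨k + 1, ⟨by omega, by simpa using Finset.le_sup (f := id) hkt⟩, hkW⟩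

theorem isCompact_closure_zpowers_of_mapClusterPt_one [LocallyCompactSpace G]
    (h : MapClusterPt 1 atTop (a ^ · : ℤ → G)) :
    IsCompact (closure (Subgroup.zpowers a : Set G)) := by
  set H := closure (Subgroup.zpowers a : Set G)
  have hH : ∀ x ∈ H, MapClusterPt x atTop (a ^ · : ℕ → G) :=
    fun x hx => closure_zpowers_subset_setOf_mapClusterPt h hx
  obtain ⟨V, hV, hV1⟩ := exists_compact_mem_nhds (1 : G)
  have hW1 : (1 : G) ∈ interior V := mem_interior_iff_mem_nhds.2 hV1
  obtain ⟨N, hN⟩ := (hV.inter_right isClosed_closure).exists_mul_inv_pow_mem_of_mapClusterPt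
    (fun x hx => hH x hx.2) isOpen_interior hW1
  refine ((finite_Iic N).isCompact_biUnion fun m _ => hV.inv.smul (a ^ m)).of_isClosed_subset
    isClosed_closure fun x hx => ?_
  have hex : ∃ m : ℕ, x⁻¹ * a ^ m ∈ interior V :=
    (mapClusterPt_iff_frequently.1 (hH x hx) _ <|
      (isOpen_interior.preimage (continuous_const_mul x⁻¹)).mem_nhds (by simpa using hW1)).exists
  classical
  set m := Nat.find hex
  have hm : x⁻¹ * a ^ m ∈ interior V := Nat.find_spec hex
  have hmN : m ≤ N := by
    by_contra! hNm
    have hxH : x⁻¹ * a ^ m ∈ V ∩ H := by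
      refine ⟨interior_subset hm, ?_⟩
      have hx' : x ∈ (Subgroup.zpowers a).topologicalClosure := hx
      exact mul_mem (inv_mem hx') (Subgroup.le_topologicalClosure _ (Subgroup.npow_mem_zpowers a m))
    obtain ⟨k, ⟨hk1, hkN⟩, hkW⟩ := hN _ hxH
    refine Nat.find_min hex (show m - k < m by omega) ?_
    rwa [pow_sub a (by omega : k ≤ m), ← mul_assoc]
  refine mem_biUnion (x := m) hmN ?_
  rw [mem_smul_set_iff_inv_smul_mem, smul_eq_mul, Set.mem_inv, mul_inv_rev, inv_inv]
  exact interior_subset hm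

theorem isCompact_closure_zpowers_of_frequently_pow_mem [LocallyCompactSpace G] {K : Set G}
    (hK : IsCompact K) (h : ∃ᶠ n : ℕ in atTop, a ^ n ∈ K) :
    IsCompact (closure (Subgroup.zpowers a : Set G)) := by
  obtain ⟨y, -, hy⟩ := hK.exists_mapClusterPt_of_frequently h
  exact isCompact_closure_zpowers_of_mapClusterPt_one
    (mapClusterPt_atTop_zpow_iff_pow.2 hy).one_of_zpow

end

theorem aperiodic_iff_compact_separation_general
    {G : Type*} [Group G] [TopologicalSpace G] [IsTopologicalGroup G]
    [LocallyCompactSpace G] (a : G) :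
    ¬ IsCompact (closure (Subgroup.zpowers a : Set G)) ↔
      ∀ E : Set G, IsCompact E → ∃ N : ℕ, ∀ n : ℕ, N ≤ n →
        E ∩ ((fun x => x * a ^ n) '' E) = ∅ := by
  constructor
  · intro hH E hE
    by_contra! hE_ret
    refine hH (isCompact_closure_zpowers_of_frequently_pow_mem (hE.inv.mul hE) ?_)
    refine frequently_atTop.2 fun N => ?_
    obtain ⟨n, hn, hne⟩ := hE_ret N
    exact ⟨n, hn, inter_image_mul_right_nonempty_iff.1 hne⟩
  · intro hsep hH
    obtain ⟨N, hN⟩ := hsep _ hH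
    refine Nonempty.ne_empty ?_ (hN N le_rfl)
    exact ⟨a ^ N, subset_closure (Subgroup.npow_mem_zpowers a N), 1,
      subset_closure (Subgroup.one_mem _), one_mul _⟩

theorem aperiodic_iff_compact_separation
    {G : Type*} [Group G] [TopologicalSpace G] [IsTopologicalGroup G]
    [LocallyCompactSpace G] [SecondCountableTopology G] [T2Space G] (a : G) :
    ¬ IsCompact (closure (Subgroup.zpowers a : Set G)) ↔
      ∀ E : Set G, IsCompact E → ∃ N : ℕ, ∀ n : ℕ, N ≤ n →
        E ∩ ((fun x => x * a ^ n) '' E) = ∅ :=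
  aperiodic_iff_compact_separation_general a
end
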